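/- Fix n ≥ 1, and on (ℂ²)^{⊗n} ≅ ℂ^{2^n} let Z_i denote Pauli Z = [[1,0],[0,−1]] acting on the i-th tensor factor and A_i denote the lowering matrix A = [[0,0],[1,0]] acting on the i-th tensor factor (each tensored with identity elsewhere). For complex numbers c, c₁,…,cₙ, d₁,…,dₙ, let O := c·I + Σ_{i=1}^n (c_i Z_i + d_i A_i). Then det O = Π_{σ ∈ {−1,+1}^n} (c + Σ_{i=1}^n c_i σ_i). In particular, the least singular value of O is zero (O is singular) if and only if c + Σ_i c_i σ_i = 0 for some sign vector σ ∈ {−1,+1}^n. -/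

import Mathlib

open scoped BigOperators

/-- Pauli Z matrix. -/
def pauliZ : Matrix (Fin 2) (Fin 2) ℂ := !![1, 0; 0, -1]

/-- The lowering matrix `A = [[0,0],[1,0]]`. -/
def lowerA : Matrix (Fin 2) (Fin 2) ℂ := !![0, 0; 1, 0]

/-- The 2×2 matrix `M` acting on the `i`-th tensor factor of `(ℂ²)^{⊗n} ≅ ℂ^{2^n}`,
i.e. `I₂^{⊗(i−1)} ⊗ M ⊗ I₂^{⊗(n−i)}`, realizing `ℂ^{2^n}` as functions `Fin n → Fin 2`. -/
def onFactor {n : ℕ} (M : Matrix (Fin 2) (Fin 2) ℂ) (i : Fin n) :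
    Matrix (Fin n → Fin 2) (Fin n → Fin 2) ℂ :=
  Matrix.of fun f g => ∏ j, (if j = i then M else 1) (f j) (g j)

/-! Order the basis `Fin n → Fin 2` lexicographically. Each `Z_i` is diagonal and each `A_i` sends
a basis vector to one that is lexicographically smaller (it lowers the `i`-th coordinate and fixes
the others), so `O` is lower triangular and its determinant is the product of its diagonal entries
`c + ∑ i, c_i Z(f_i, f_i)`. -/

open Matrix

theorem Matrix.det_of_blockTriangular_of_injective {m α R : Type*} [Fintype m] [DecidableEq m]
    [CommRing R] [LinearOrder α] {M : Matrix m m R} {b : m → α}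
    (hM : M.BlockTriangular b) (hb : Function.Injective b) : M.det = ∏ i, M i i := by
  let : LinearOrder m := LinearOrder.lift' b hb
  convert det_of_isUpperTriangular (M := M) hM

theorem onFactor_apply_self {n : ℕ} (M : Matrix (Fin 2) (Fin 2) ℂ) (i : Fin n)
    (f : Fin n → Fin 2) : onFactor M i f f = M (f i) (f i) := by
  rw [onFactor, of_apply, Fintype.prod_eq_single i fun j hj => by simp [hj]]
  simp

theorem onFactor_blockTriangular_toLex {n : ℕ} {M : Matrix (Fin 2) (Fin 2) ℂ}
    (hM : M.IsLowerTriangular) (i : Fin n) :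
    (onFactor M i).BlockTriangular (OrderDual.toDual ∘ toLex) := by
  rintro f g ⟨k, -, hk⟩
  refine Finset.prod_eq_zero (Finset.mem_univ k) ?_
  split_ifs
  · exact hM hk
  · exact one_apply_ne hk.ne

theorem pauliZ_isLowerTriangular : pauliZ.IsLowerTriangular := by
  intro x y h
  rw [OrderDual.toDual_lt_toDual] at h
  fin_cases x <;> fin_cases y <;> simp_all [pauliZ]

theorem lowerA_isLowerTriangular : lowerA.IsLowerTriangular := by
  intro x y h
  rw [OrderDual.toDual_lt_toDual] at h
  fin_cases x <;> fin_cases y <;> simp_all [lowerA]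

theorem lowerA_apply_self (x : Fin 2) : lowerA x x = 0 := by
  fin_cases x <;> simp [lowerA]

theorem det_smul_one_add_sum_onFactor {n : ℕ} (c : ℂ) (cs ds : Fin n → ℂ) :
    (c • 1 + ∑ i, (cs i • onFactor pauliZ i + ds i • onFactor lowerA i)).det =
      ∏ f : Fin n → Fin 2, (c + ∑ i, cs i * pauliZ (f i) (f i)) := by
  let S := blockTriangularSubalgebra ℂ ℂ (OrderDual.toDual ∘ toLex : (Fin n → Fin 2) → _)
  have hO : c • 1 + ∑ i, (cs i • onFactor pauliZ i + ds i • onFactor lowerA i) ∈ S :=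
    add_mem (Subalgebra.smul_mem _ (one_mem S) c) <| Subalgebra.sum_mem _ fun i _ =>
      add_mem (Subalgebra.smul_mem _ (onFactor_blockTriangular_toLex pauliZ_isLowerTriangular i) _)
        (Subalgebra.smul_mem _ (onFactor_blockTriangular_toLex lowerA_isLowerTriangular i) _)
  rw [det_of_blockTriangular_of_injective hO (OrderDual.toDual.injective.comp toLex.injective)]
  simp [Matrix.sum_apply, onFactor_apply_self, lowerA_apply_self]

theorem pauliZ_apply_self_boolNot (b : Bool) :
    pauliZ (finTwoEquiv.symm !b) (finTwoEquiv.symm !b) = if b then 1 else -1 := by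
  cases b <;> simp [pauliZ, finTwoEquiv]

theorem stmt15_general (n : ℕ) (c : ℂ) (cs ds : Fin n → ℂ) :
    let O : Matrix (Fin n → Fin 2) (Fin n → Fin 2) ℂ :=
      c • 1 + ∑ i, (cs i • onFactor pauliZ i + ds i • onFactor lowerA i)
    O.det = (∏ σ : Fin n → Bool, (c + ∑ i, cs i * (if σ i then 1 else -1))) ∧
      (O.det = 0 ↔ ∃ σ : Fin n → Bool, c + ∑ i, cs i * (if σ i then 1 else -1) = 0) := by
  intro O
  have hdet : O.det = ∏ σ : Fin n → Bool, (c + ∑ i, cs i * (if σ i then 1 else -1)) := by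
    rw [det_smul_one_add_sum_onFactor]
    refine (Fintype.prod_equiv (.piCongrRight fun _ => Equiv.boolNot.trans finTwoEquiv.symm)
      _ _ fun σ => ?_).symm
    simp [pauliZ_apply_self_boolNot]
  exact ⟨hdet, by simp [hdet, Finset.prod_eq_zero_iff]⟩

theorem stmt15 (n : ℕ) (hn : 1 ≤ n) (c : ℂ) (cs ds : Fin n → ℂ) :
    let O : Matrix (Fin n → Fin 2) (Fin n → Fin 2) ℂ :=
      c • 1 + ∑ i, (cs i • onFactor pauliZ i + ds i • onFactor lowerA i)
    O.det = (∏ σ : Fin n → Bool, (c + ∑ i, cs i * (if σ i then 1 else -1))) ∧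
      (O.det = 0 ↔ ∃ σ : Fin n → Bool, c + ∑ i, cs i * (if σ i then 1 else -1) = 0) :=
  stmt15_general n c cs ds
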